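/- Let b be smooth on 𝕋² with 0 < b_min ≤ b ≤ b_max. For u, v smooth vector fields on 𝕋² satisfying ∇·(bu) = 0 and ∇·(bv) = 0, and δ > 0, the bilinear form ℓ(u,v) := ⟨Mu, v⟩_b, where M is the great lake operator, satisfies the identity ℓ(u,v) = ⟨u,v⟩_b + (δ²/3)⟨u·∇b, v·∇b⟩_b. In particular ℓ is symmetric, continuous, and coercive on the L²_b-closure of weighted divergence-free smooth vector fields. -/

import Mathlib

open MeasureTheory Real Filter
open scoped RealInnerProductSpace

noncomputable section

/-- Points of the (universal cover of the) 2-torus. -/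
abbrev V : Type := Fin 2 → ℝ

/-- A fundamental domain for 𝕋² = ℝ²/ℤ². -/
def box : Set V := Set.Icc 0 1

/-- Partial derivative in direction `i`. -/
def pderiv (i : Fin 2) (f : V → ℝ) (x : V) : ℝ := fderiv ℝ f x (Pi.single i 1)

/-- Gradient. -/
def grad (f : V → ℝ) (x : V) : V := fun i => pderiv i f x

/-- Euclidean dot product on ℝ². -/
def dot (u v : V) : ℝ := ∑ i, u i * v i

/-- Euclidean norm on ℝ². -/
def enorm2 (u : V) : ℝ := Real.sqrt (∑ i, u i ^ 2)

/-- Lie derivative (transport operator) `L_ξ f = ξ·∇f`. -/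
def lie (ξ : V → V) (f : V → ℝ) (x : V) : ℝ := dot (ξ x) (grad f x)

/-- Divergence of a vector field. -/
def divg (v : V → V) (x : V) : ℝ := ∑ i, pderiv i (fun y => v y i) x

/-- ℤ²-periodicity of a scalar function, i.e. `f` is a function on 𝕋². -/
def Per (f : V → ℝ) : Prop := ∀ (x : V) (n : Fin 2 → ℤ), f (x + fun i => (n i : ℝ)) = f x

/-- ℤ²-periodicity of a vector field. -/
def PerV (v : V → V) : Prop := ∀ (x : V) (n : Fin 2 → ℤ), v (x + fun i => (n i : ℝ)) = v x

/-- Smoothness of a vector field. -/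
def SmoothV (v : V → V) : Prop := ∀ i, ContDiff ℝ (⊤ : ℕ∞) (fun x => v x i)

/-- Weighted inner product `⟨f,g⟩_b = ∫_{𝕋²} f g b dx`. -/
def ipb (b f g : V → ℝ) : ℝ := ∫ x in box, f x * g x * b x

/-- Squared weighted Sobolev norm `‖f‖_{b,m,2}²` (via iterated derivatives). -/
def sobSq (b : V → ℝ) (m : ℕ) (f : V → ℝ) : ℝ :=
  ∑ n ∈ Finset.range (m + 1), ∫ x in box, ‖iteratedFDeriv ℝ n f x‖ ^ 2 * b x

/-- Weighted Sobolev norm `‖f‖_{b,m,2}`. -/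
def sobNorm (b : V → ℝ) (m : ℕ) (f : V → ℝ) : ℝ := Real.sqrt (sobSq b m f)

/-- Squared weighted Sobolev norm of a vector field. -/
def sobSqV (b : V → ℝ) (m : ℕ) (v : V → V) : ℝ := ∑ i, sobSq b m (fun x => v x i)

/-- Weighted L² norm. -/
def nb2 (b f : V → ℝ) : ℝ := Real.sqrt (∫ x in box, f x ^ 2 * b x)

/-- Weighted L⁴ norm of a scalar function. -/
def nb4 (b f : V → ℝ) : ℝ := (∫ x in box, |f x| ^ 4 * b x) ^ (4⁻¹ : ℝ)

/-- Weighted L⁴ norm of a vector field. -/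
def nb4V (b : V → ℝ) (v : V → V) : ℝ := (∫ x in box, enorm2 (v x) ^ 4 * b x) ^ (4⁻¹ : ℝ)

/-- The great lake operator `M`. -/
def Mop (b : V → ℝ) (δ : ℝ) (u : V → V) (x : V) : V := fun i =>
  u x i + δ ^ 2 * (b x)⁻¹ *
    (-(1 / 3) * pderiv i (fun y => b y ^ 3 * divg u y) x
      - (1 / 2) * pderiv i (fun y => b y ^ 2 * dot (u y) (grad b y)) x
      + (1 / 2) * b x ^ 2 * divg u x * grad b x i
      + b x * dot (u x) (grad b x) * grad b x i)

section Helpers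

lemma contDiff_pderiv {f : V → ℝ} (hf : ContDiff ℝ (⊤ : ℕ∞) f) (i : Fin 2) :
    ContDiff ℝ (⊤ : ℕ∞) (pderiv i f) := by
  have h : ContDiff ℝ (⊤ : ℕ∞) (fderiv ℝ f) := hf.fderiv_right (by simp)
  exact h.clm_apply contDiff_const

lemma contDiff_divg {w : V → V} (hw : SmoothV w) : ContDiff ℝ (⊤ : ℕ∞) (divg w) := by
  have : divg w = fun x => ∑ i, pderiv i (fun y => w y i) x := rfl
  rw [this]
  exact ContDiff.sum fun i _ => contDiff_pderiv (hw i) i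

lemma contDiff_grad_comp {f : V → ℝ} (hf : ContDiff ℝ (⊤ : ℕ∞) f) (i : Fin 2) :
    ContDiff ℝ (⊤ : ℕ∞) (fun x => grad f x i) := contDiff_pderiv hf i

lemma per_pderiv {f : V → ℝ} (hf : ContDiff ℝ (⊤ : ℕ∞) f) (hper : Per f) (i : Fin 2) :
    Per (pderiv i f) := by
  intro x n
  set c : V := fun j => (n j : ℝ) with hc
  have key : ∀ y, f (y + c) = f y := fun y => hper y n
  have h1 : HasFDerivAt f (fderiv ℝ f (x + c)) (x + c) :=
    (hf.differentiable (by simp) (x + c)).hasFDerivAt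
  have h2 : HasFDerivAt (fun y : V => f (y + c)) (fderiv ℝ f (x + c)) x := by
    have ht : HasFDerivAt (fun y : V => y + c) (ContinuousLinearMap.id ℝ V) x :=
      (hasFDerivAt_id x).add_const c
    simpa [Function.comp_def] using h1.comp x ht
  rw [show (fun y : V => f (y + c)) = f from funext key] at h2
  have : fderiv ℝ f x = fderiv ℝ f (x + c) := h2.fderiv
  simp only [pderiv, this]

end Helpers
section Helpers2

lemma per_mul {f g : V → ℝ} (hf : Per f) (hg : Per g) : Per (fun x => f x * g x) := by
  intro x n; simp only [hf x n, hg x n]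

lemma per_divg {w : V → V} (hw : SmoothV w) (hwp : PerV w) : Per (divg w) := by
  intro x n
  have : ∀ i : Fin 2, Per (fun y => w y i) := by
    intro i y m; simp only [hwp y m]
  simp only [divg]
  exact Finset.sum_congr rfl fun i _ => per_pderiv (hw i) (this i) i x n

/-- The divergence theorem on the torus: the integral of the divergence of a
smooth periodic vector field over the fundamental domain vanishes. -/
lemma integral_divg_zero {w : V → V} (hw : SmoothV w) (hwper : PerV w) :
    ∫ x in box, divg w x = 0 := by
  have hle : (0 : V) ≤ 1 := fun i => by norm_num
  set f' : V → V →L[ℝ] V :=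
    fun x => ContinuousLinearMap.pi (fun i => fderiv ℝ (fun y => w y i) x) with hf'
  have hd : ∀ (x : V), HasFDerivAt w (f' x) x := by
    intro x
    exact hasFDerivAt_pi.2 fun i => ((hw i).differentiable (by simp) x).hasFDerivAt
  have hdiv_eq : (fun x => ∑ i, f' x (Pi.single i 1) i) = divg w := by
    funext x
    refine Finset.sum_congr rfl fun i _ => ?_
    simp [hf', ContinuousLinearMap.pi_apply, divg, pderiv]
  have hcont : Continuous (divg w) := (contDiff_divg hw).continuous
  have key := MeasureTheory.integral_divergence_of_hasFDerivAt_off_countable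
    (a := (0 : V)) (b := (1 : V)) hle w f' ∅ Set.countable_empty
    (continuous_pi fun i => (hw i).continuous).continuousOn
    (fun x _ => hd x)
    (by
      rw [hdiv_eq]
      exact hcont.continuousOn.integrableOn_compact isCompact_Icc)
  rw [hdiv_eq] at key
  have hbox : box = Set.Icc (0 : V) 1 := rfl
  rw [hbox, key]
  refine Finset.sum_eq_zero fun i _ => ?_
  have hfront : ∀ y : Fin 1 → ℝ,
      w (Fin.insertNth i ((1 : V) i) y) = w (Fin.insertNth i ((0 : V) i) y) := by
    intro y
    have harg : Fin.insertNth i ((1 : V) i) y =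
        Fin.insertNth i ((0 : V) i) y + fun j => (((Pi.single i 1 : Fin 2 → ℤ) j : ℝ)) := by
      funext j
      refine Fin.succAboveCases i ?_ ?_ j
      · simp
      · intro k
        simp [Fin.insertNth_apply_succAbove, Pi.single_eq_of_ne (Fin.succAbove_ne i k)]
    rw [harg, hwper]
  rw [show (fun y => w (Fin.insertNth i ((1:V) i) y) i)
      = (fun y => w (Fin.insertNth i ((0:V) i) y) i) from funext fun y => by rw [hfront y]]
  exact sub_self _

end Helpers2
section Helpers3

lemma pderiv_mul (i : Fin 2) {f g : V → ℝ} (hf : ContDiff ℝ (⊤ : ℕ∞) f) (hg : ContDiff ℝ (⊤ : ℕ∞) g) (x : V) :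
    pderiv i (fun y => f y * g y) x = f x * pderiv i g x + g x * pderiv i f x := by
  simp only [pderiv]
  rw [fderiv_fun_mul (hf.differentiable (by simp) x) (hg.differentiable (by simp) x)]
  simp

lemma pderiv_combo (i : Fin 2) (c₁ c₂ : ℝ) {f g : V → ℝ}
    (hf : ContDiff ℝ (⊤ : ℕ∞) f) (hg : ContDiff ℝ (⊤ : ℕ∞) g) (x : V) :
    pderiv i (fun y => c₁ * f y + c₂ * g y) x = c₁ * pderiv i f x + c₂ * pderiv i g x := by
  simp only [pderiv]
  rw [fderiv_fun_add ((hf.differentiable (by simp) x).const_mul c₁)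
      ((hg.differentiable (by simp) x).const_mul c₂),
    fderiv_const_mul (hf.differentiable (by simp) x) c₁,
    fderiv_const_mul (hg.differentiable (by simp) x) c₂]
  simp

lemma divg_smul {h : V → ℝ} {w : V → V} (hh : ContDiff ℝ (⊤ : ℕ∞) h) (hw : SmoothV w) (x : V) :
    divg (fun y j => h y * w y j) x = dot (grad h x) (w x) + h x * divg w x := by
  have e : ∀ j : Fin 2, pderiv j (fun y => h y * w y j) x
      = h x * pderiv j (fun y => w y j) x + w x j * pderiv j h x :=
    fun j => pderiv_mul j hh (hw j) x
  simp only [divg, dot, grad, Fin.sum_univ_two]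
  rw [e 0, e 1]
  ring

lemma div_constraint {b : V → ℝ} {w : V → V} (hb : ContDiff ℝ (⊤ : ℕ∞) b) (hw : SmoothV w)
    (hdiv : ∀ x, divg (fun y i => b y * w y i) x = 0) (x : V) :
    dot (w x) (grad b x) = -(b x * divg w x) := by
  have h0 := hdiv x
  rw [divg_smul hb hw x] at h0
  have hc : dot (w x) (grad b x) = dot (grad b x) (w x) := by
    simp only [dot, Fin.sum_univ_two]; ring
  rw [hc]; linarith

lemma contDiff_dotgrad {b : V → ℝ} {u : V → V} (hb : ContDiff ℝ (⊤ : ℕ∞) b) (hu : SmoothV u) :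
    ContDiff ℝ (⊤ : ℕ∞) (fun x => dot (u x) (grad b x)) := by
  have : (fun x => dot (u x) (grad b x)) = fun x => ∑ i, (u x i * pderiv i b x) := rfl
  rw [this]
  exact ContDiff.sum fun i _ => (hu i).mul (contDiff_pderiv hb i)

lemma contDiff_dotV {u v : V → V} (hu : SmoothV u) (hv : SmoothV v) :
    ContDiff ℝ (⊤ : ℕ∞) (fun x => dot (u x) (v x)) := by
  have : (fun x => dot (u x) (v x)) = fun x => ∑ i, (u x i * v x i) := rfl
  rw [this]
  exact ContDiff.sum fun i _ => (hu i).mul (hv i)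

lemma per_dotgrad {b : V → ℝ} {u : V → V} (hb : ContDiff ℝ (⊤ : ℕ∞) b) (hbper : Per b)
    (hu : SmoothV u) (hup : PerV u) : Per (fun x => dot (u x) (grad b x)) := by
  intro x n
  simp only [dot, grad]
  refine Finset.sum_congr rfl fun i _ => ?_
  rw [hup x n, per_pderiv hb hbper i x n]

end Helpers3
section Helpers4

lemma dot_comm' (a w : V) : dot a w = dot w a := by
  simp only [dot, Fin.sum_univ_two]; ring

lemma dot_combo (c₁ c₂ : ℝ) (a a' w : V) :
    dot (fun i => c₁ * a i + c₂ * a' i) w = c₁ * dot a w + c₂ * dot a' w := by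
  simp only [dot, Fin.sum_univ_two]; ring

lemma key_pointwise {b : V → ℝ} {u v : V → V} (δ : ℝ)
    (hb : ContDiff ℝ (⊤ : ℕ∞) b) (hu : SmoothV u) (hv : SmoothV v)
    (hdivu : ∀ x, divg (fun y i => b y * u y i) x = 0)
    (hdivv : ∀ x, divg (fun y i => b y * v y i) x = 0)
    (x : V) (hbx : b x ≠ 0) :
    dot (Mop b δ u x) (v x) * b x
      = dot (u x) (v x) * b x
        + δ ^ 2 / 3 * (dot (u x) (grad b x) * dot (v x) (grad b x) * b x)
        + δ ^ 2 * divg (fun y j =>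
            (-(1/3) * (b y ^ 3 * divg u y) + -(1/2) * (b y ^ 2 * dot (u y) (grad b y)))
              * v y j) x := by
  have hsg₁ : ContDiff ℝ (⊤ : ℕ∞) (fun y => b y ^ 3 * divg u y) :=
    (hb.pow 3).mul (contDiff_divg hu)
  have hsg₂ : ContDiff ℝ (⊤ : ℕ∞) (fun y => b y ^ 2 * dot (u y) (grad b y)) :=
    (hb.pow 2).mul (contDiff_dotgrad hb hu)
  have hsh : ContDiff ℝ (⊤ : ℕ∞) (fun y =>
      -(1/3) * (b y ^ 3 * divg u y) + -(1/2) * (b y ^ 2 * dot (u y) (grad b y))) :=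
    (contDiff_const.mul hsg₁).add (contDiff_const.mul hsg₂)
  have hdF : divg (fun y j =>
        (-(1/3) * (b y ^ 3 * divg u y) + -(1/2) * (b y ^ 2 * dot (u y) (grad b y)))
          * v y j) x
      = dot (grad (fun y =>
            -(1/3) * (b y ^ 3 * divg u y) + -(1/2) * (b y ^ 2 * dot (u y) (grad b y))) x)
          (v x)
        + (-(1/3) * (b x ^ 3 * divg u x) + -(1/2) * (b x ^ 2 * dot (u x) (grad b x)))
            * divg v x := divg_smul hsh hv x
  have hgh : grad (fun y =>
        -(1/3) * (b y ^ 3 * divg u y) + -(1/2) * (b y ^ 2 * dot (u y) (grad b y))) x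
      = fun i => -(1/3) * grad (fun y => b y ^ 3 * divg u y) x i
          + -(1/2) * grad (fun y => b y ^ 2 * dot (u y) (grad b y)) x i :=
    funext fun i => pderiv_combo i (-(1/3)) (-(1/2)) hsg₁ hsg₂ x
  have hMv : dot (Mop b δ u x) (v x)
      = dot (u x) (v x) + δ ^ 2 * (b x)⁻¹ *
          (-(1/3) * dot (grad (fun y => b y ^ 3 * divg u y) x) (v x)
            - (1/2) * dot (grad (fun y => b y ^ 2 * dot (u y) (grad b y)) x) (v x)
            + (1/2) * b x ^ 2 * divg u x * dot (grad b x) (v x)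
            + b x * dot (u x) (grad b x) * dot (grad b x) (v x)) := by
    simp only [Mop, dot, grad, Fin.sum_univ_two]
    ring
  have hp : dot (u x) (grad b x) = -(b x * divg u x) := div_constraint hb hu hdivu x
  have hq : dot (v x) (grad b x) = -(b x * divg v x) := div_constraint hb hv hdivv x
  have hcv : dot (grad b x) (v x) = dot (v x) (grad b x) := dot_comm' _ _
  rw [hMv, hdF, hgh, dot_combo, hcv, hp, hq]
  field_simp
  ring

end Helpers4

/-- For `u, v` smooth vector fields on 𝕋² with `∇·(bu) = ∇·(bv) = 0` and
`δ > 0`, the bilinear form `ℓ(u,v) = ⟨Mu, v⟩_b` satisfies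
`ℓ(u,v) = ⟨u,v⟩_b + (δ²/3)⟨u·∇b, v·∇b⟩_b`; in particular it is symmetric. -/
theorem great_lake_form (b : V → ℝ) (bmin bmax : ℝ) (hbmin : 0 < bmin)
    (hb : ContDiff ℝ (⊤ : ℕ∞) b) (hbper : Per b)
    (hbd : ∀ x, bmin ≤ b x ∧ b x ≤ bmax) (δ : ℝ) (hδ : 0 < δ)
    (u v : V → V) (hu : SmoothV u) (huper : PerV u)
    (hv : SmoothV v) (hvper : PerV v)
    (hdivu : ∀ x, divg (fun y i => b y * u y i) x = 0)
    (hdivv : ∀ x, divg (fun y i => b y * v y i) x = 0) :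
    (∫ x in box, dot (Mop b δ u x) (v x) * b x) =
      (∫ x in box, dot (u x) (v x) * b x) +
        δ ^ 2 / 3 * ∫ x in box, dot (u x) (grad b x) * dot (v x) (grad b x) * b x := by
  have hBne : ∀ x, b x ≠ 0 := fun x => ne_of_gt (lt_of_lt_of_le hbmin (hbd x).1)
  have hsh : ContDiff ℝ (⊤ : ℕ∞) (fun y =>
      -(1/3) * (b y ^ 3 * divg u y) + -(1/2) * (b y ^ 2 * dot (u y) (grad b y))) :=
    (contDiff_const.mul ((hb.pow 3).mul (contDiff_divg hu))).add
      (contDiff_const.mul ((hb.pow 2).mul (contDiff_dotgrad hb hu)))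
  have hsF : SmoothV (fun y j =>
      (-(1/3) * (b y ^ 3 * divg u y) + -(1/2) * (b y ^ 2 * dot (u y) (grad b y))) * v y j) :=
    fun j => hsh.mul (hv j)
  have hpF : PerV (fun y j =>
      (-(1/3) * (b y ^ 3 * divg u y) + -(1/2) * (b y ^ 2 * dot (u y) (grad b y))) * v y j) := by
    intro x n
    funext j
    have h1 : dot (u (x + fun i => (n i : ℝ))) (grad b (x + fun i => (n i : ℝ)))
        = dot (u x) (grad b x) := by
      simpa using per_dotgrad hb hbper hu huper x n
    have h2 : divg u (x + fun i => (n i : ℝ)) = divg u x := per_divg hu huper x n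
    simp only [hbper x n, hvper x n, h1, h2]
  have hpoint := fun x => key_pointwise δ hb hu hv hdivu hdivv x (hBne x)
  have hcomp : IsCompact box := isCompact_Icc
  have hi1 : MeasureTheory.IntegrableOn (fun x => dot (u x) (v x) * b x) box :=
    ((contDiff_dotV hu hv).mul hb).continuous.continuousOn.integrableOn_compact hcomp
  have hi2 : MeasureTheory.IntegrableOn
      (fun x => δ ^ 2 / 3 * (dot (u x) (grad b x) * dot (v x) (grad b x) * b x)) box :=
    (continuous_const.mul (((contDiff_dotgrad hb hu).continuous.mul
      (contDiff_dotgrad hb hv).continuous).mul hb.continuous)).continuousOn.integrableOn_compact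
      hcomp
  have hi3 : MeasureTheory.IntegrableOn (fun x => δ ^ 2 * divg (fun y j =>
      (-(1/3) * (b y ^ 3 * divg u y) + -(1/2) * (b y ^ 2 * dot (u y) (grad b y))) * v y j) x)
      box :=
    (continuous_const.mul (contDiff_divg hsF).continuous).continuousOn.integrableOn_compact hcomp
  have hi12 : MeasureTheory.IntegrableOn (fun x => dot (u x) (v x) * b x
      + δ ^ 2 / 3 * (dot (u x) (grad b x) * dot (v x) (grad b x) * b x)) box := hi1.add hi2
  simp only [hpoint]
  rw [MeasureTheory.integral_add hi12 hi3, MeasureTheory.integral_add hi1 hi2,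
    MeasureTheory.integral_const_mul, MeasureTheory.integral_const_mul,
    integral_divg_zero hsF hpF, mul_zero, add_zero]
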